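/- Let α₀ > 0 be the unique positive root of α(exp(α) - 1) = 1 + exp(α). For every α > α₀, one has log((α - 1)/(α + 1)) > -α; consequently, on the feasible margin interval [-α, α] the function f_α(z) = 1 / (1 + exp(z)) + α · exp(z) / (1 + exp(z))² is strictly increasing on [-α, log((α - 1)/(α + 1))] and strictly decreasing on [log((α - 1)/(α + 1)), α]. -/

import Mathlib

/-!
The peak of `f_α` is where `f_α'(z) = eᶻ ((α - 1) - (α + 1) eᶻ) / (1 + eᶻ)³` changes sign,
i.e. at `z = log ((α - 1) / (α + 1))`, and this point exceeds `-α` iff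
`e^{-α} < (α - 1) / (α + 1)`. The root equation says exactly `e^{-α₀} = (α₀ - 1) / (α₀ + 1)`,
so for `α > α₀` the left side has decreased and the right side, `1 - 2 / (α + 1)`, has increased.
-/

/-- The upper bound on the gradient representation's discriminative power:
`f_α(z) = 1 / (1 + exp z) + α exp z / (1 + exp z)²`. -/
noncomputable def discPowerBound (α z : ℝ) : ℝ :=
  1 / (1 + Real.exp z) + α * Real.exp z / (1 + Real.exp z) ^ 2

open Real Set

lemma one_lt_of_mul_exp_sub_one_eq {a : ℝ} (ha : 0 < a) (h : a * (exp a - 1) = 1 + exp a) :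
    1 < a := by
  by_contra! ha1
  nlinarith [exp_pos a, one_lt_exp_iff.mpr ha]

lemma exp_neg_eq_of_mul_exp_sub_one_eq {a : ℝ} (h : a * (exp a - 1) = 1 + exp a) :
    exp (-a) = (a - 1) / (a + 1) := by
  have ha : a + 1 ≠ 0 := by
    rintro hz
    rw [eq_neg_of_add_eq_zero_left hz] at h
    linarith [exp_pos (-1)]
  rw [exp_neg, eq_div_iff ha]
  field_simp
  linarith

lemma sub_one_div_add_one_lt {a b : ℝ} (ha : -1 < a) (hab : a < b) :
    (a - 1) / (a + 1) < (b - 1) / (b + 1) := by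
  rw [div_lt_div_iff₀ (by linarith) (by linarith)]
  nlinarith

lemma neg_lt_log_sub_one_div_add_one {α₀ α : ℝ} (hα₀ : 0 < α₀)
    (hroot : α₀ * (exp α₀ - 1) = 1 + exp α₀) (hα : α₀ < α) :
    -α < log ((α - 1) / (α + 1)) := by
  have hα₀1 := one_lt_of_mul_exp_sub_one_eq hα₀ hroot
  rw [lt_log_iff_exp_lt (div_pos (by linarith) (by linarith))]
  calc exp (-α) < exp (-α₀) := exp_lt_exp.mpr (neg_lt_neg hα)
    _ = (α₀ - 1) / (α₀ + 1) := exp_neg_eq_of_mul_exp_sub_one_eq hroot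
    _ < (α - 1) / (α + 1) := sub_one_div_add_one_lt (by linarith) hα

lemma hasDerivAt_discPowerBound (α z : ℝ) :
    HasDerivAt (discPowerBound α)
      (exp z * ((α - 1) - (α + 1) * exp z) / (1 + exp z) ^ 3) z := by
  have hpos : 0 < 1 + exp z := by positivity
  have hden : HasDerivAt (fun z => 1 + exp z) (exp z) z := (hasDerivAt_exp z).const_add 1
  have h := ((hasDerivAt_const z 1).div hden hpos.ne').add
    (((hasDerivAt_exp z).const_mul α).div (hden.pow 2) (pow_pos hpos 2).ne')
  refine h.congr_deriv ?_
  simp only [Pi.pow_apply]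
  field_simp
  ring

lemma continuous_discPowerBound (α : ℝ) : Continuous (discPowerBound α) :=
  continuous_iff_continuousAt.mpr fun z => (hasDerivAt_discPowerBound α z).continuousAt

lemma discPowerBound_strictMonoOn_Iic {α : ℝ} (hα : 1 < α) :
    StrictMonoOn (discPowerBound α) (Iic (log ((α - 1) / (α + 1)))) := by
  refine strictMonoOn_of_deriv_pos (convex_Iic _) (continuous_discPowerBound α).continuousOn ?_
  intro z hz
  rw [interior_Iic, mem_Iio, lt_log_iff_exp_lt (div_pos (by linarith) (by linarith)),
    lt_div_iff₀ (by linarith)] at hz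
  rw [(hasDerivAt_discPowerBound α z).deriv]
  exact div_pos (mul_pos (exp_pos z) (by linarith)) (by positivity)

lemma discPowerBound_strictAntiOn_Ici {α : ℝ} (hα : 1 < α) :
    StrictAntiOn (discPowerBound α) (Ici (log ((α - 1) / (α + 1)))) := by
  refine strictAntiOn_of_deriv_neg (convex_Ici _) (continuous_discPowerBound α).continuousOn ?_
  intro z hz
  rw [interior_Ici, mem_Ioi, log_lt_iff_lt_exp (div_pos (by linarith) (by linarith)),
    div_lt_iff₀ (by linarith)] at hz
  rw [(hasDerivAt_discPowerBound α z).deriv]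
  exact div_neg_of_neg_of_pos (mul_neg_of_pos_of_neg (exp_pos z) (by linarith)) (by positivity)

/-- Let `α₀` be the (unique) positive root of `α (exp α - 1) = 1 + exp α`.
For every `α > α₀`, the peak `log ((α - 1) / (α + 1))` lies strictly inside the
feasible margin interval `[-α, α]`: `log ((α - 1) / (α + 1)) > -α`, and `f_α`
is strictly increasing on `[-α, log ((α - 1) / (α + 1))]` and strictly
decreasing on `[log ((α - 1) / (α + 1)), α]`. -/
theorem discPowerBound_peak_inside_feasible (α₀ : ℝ) (hα₀ : 0 < α₀)
    (hroot : α₀ * (Real.exp α₀ - 1) = 1 + Real.exp α₀)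
    (α : ℝ) (hα : α₀ < α) :
    -α < Real.log ((α - 1) / (α + 1)) ∧
    StrictMonoOn (discPowerBound α) (Set.Icc (-α) (Real.log ((α - 1) / (α + 1)))) ∧
    StrictAntiOn (discPowerBound α) (Set.Icc (Real.log ((α - 1) / (α + 1))) α) := by
  have hα1 : 1 < α := (one_lt_of_mul_exp_sub_one_eq hα₀ hroot).trans hα
  exact ⟨neg_lt_log_sub_one_div_add_one hα₀ hroot hα,
    (discPowerBound_strictMonoOn_Iic hα1).mono Icc_subset_Iic_self,
    (discPowerBound_strictAntiOn_Ici hα1).mono Icc_subset_Ici_self⟩
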